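/- Let φ be a formula with no free variables, let A, B be agents, and let c be the sentence this x. (((A signs x) ∧ (B signs x)) → φ). Then the formula ((A signs c) ∧ (B signs c)) → ((A says φ) ∧ (B says φ)) is derivable in the self-referential signature logic (correctness of signature in counterparts). -/
import Mathlib


mutual
inductive STerm (Ag Pr Vr : Type) (Op : ℕ → Type) : Type where
  | var : Vr → STerm Ag Pr Vr Op
  | agent : Ag → STerm Ag Pr Vr Op
  | op : (n : ℕ) → Op n → (Fin n → STerm Ag Pr Vr Op) → STerm Ag Pr Vr Op
  | ofFormula : SFormula Ag Pr Vr Op → STerm Ag Pr Vr Op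

inductive SFormula (Ag Pr Vr : Type) (Op : ℕ → Type) : Type where
  | atom : Pr → SFormula Ag Pr Vr Op
  | neg : SFormula Ag Pr Vr Op → SFormula Ag Pr Vr Op
  | and : SFormula Ag Pr Vr Op → SFormula Ag Pr Vr Op → SFormula Ag Pr Vr Op
  | entails : STerm Ag Pr Vr Op → SFormula Ag Pr Vr Op → SFormula Ag Pr Vr Op
  | signs : Ag → STerm Ag Pr Vr Op → SFormula Ag Pr Vr Op
  | says : Ag → SFormula Ag Pr Vr Op → SFormula Ag Pr Vr Op
  | self : Vr → SFormula Ag Pr Vr Op → SFormula Ag Pr Vr Op  -- `this x. φ`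
end

namespace SFormula
variable {Ag Pr Vr : Type} {Op : ℕ → Type}
/-- `φ → ψ` abbreviates `¬(φ ∧ ¬ψ)`. -/
def imp (φ ψ : SFormula Ag Pr Vr Op) : SFormula Ag Pr Vr Op := .neg (.and φ (.neg ψ))
/-- `φ ↔ ψ` is the usual boolean abbreviation. -/
def iff (φ ψ : SFormula Ag Pr Vr Op) : SFormula Ag Pr Vr Op := .and (φ.imp ψ) (ψ.imp φ)
end SFormula

variable {Ag Pr Vr : Type} {Op : ℕ → Type} [DecidableEq Vr]

mutual
/-- Substitution of the term `t` for the free occurrences of `x` in a term. -/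
def substT (x : Vr) (t : STerm Ag Pr Vr Op) : STerm Ag Pr Vr Op → STerm Ag Pr Vr Op
  | .var y => if y = x then t else .var y
  | .agent A => .agent A
  | .op n o f => .op n o (fun i => substT x t (f i))
  | .ofFormula φ => .ofFormula (substF x t φ)
/-- Substitution of the term `t` for the free occurrences of `x` in a formula. -/
def substF (x : Vr) (t : STerm Ag Pr Vr Op) : SFormula Ag Pr Vr Op → SFormula Ag Pr Vr Op
  | .atom p => .atom p
  | .neg φ => .neg (substF x t φ)
  | .and φ ψ => .and (substF x t φ) (substF x t ψ)
  | .entails u φ => .entails (substT x t u) (substF x t φ)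
  | .signs A u => .signs A (substT x t u)
  | .says A φ => .says A (substF x t φ)
  | .self y φ => if y = x then .self y φ else .self y (substF x t φ)
end

mutual
/-- `x` occurs free in a term. -/
def FreeInT (x : Vr) : STerm Ag Pr Vr Op → Prop
  | .var y => y = x
  | .agent _ => False
  | .op n _ f => ∃ i : Fin n, FreeInT x (f i)
  | .ofFormula φ => FreeInF x φ
/-- `x` occurs free in a formula. -/
def FreeInF (x : Vr) : SFormula Ag Pr Vr Op → Prop
  | .atom _ => False
  | .neg φ => FreeInF x φ
  | .and φ ψ => FreeInF x φ ∨ FreeInF x ψ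
  | .entails u φ => FreeInT x u ∨ FreeInF x φ
  | .signs _ u => FreeInT x u
  | .says _ φ => FreeInF x φ
  | .self y φ => y ≠ x ∧ FreeInF x φ
end

/-- A sentence: a formula with no free variables. -/
def Sentence (φ : SFormula Ag Pr Vr Op) : Prop := ∀ x : Vr, ¬ FreeInF x φ

structure SModel (Ag Pr Vr : Type) (Op : ℕ → Type) (W : Type) where
  Rsig : W → Ag → STerm Ag Pr Vr Op → Prop
  Rent : STerm Ag Pr Vr Op → W → Prop
  Rsays : W → Ag → W → Prop
  val : W → Pr → Prop

variable {W : Type}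

/-- Semantic `this`-nesting depth of a formula (ignores terms). -/
def sdepth : SFormula Ag Pr Vr Op → ℕ
  | .atom _ => 0
  | .neg φ => sdepth φ
  | .and φ ψ => max (sdepth φ) (sdepth ψ)
  | .entails _ φ => sdepth φ
  | .signs _ _ => 0
  | .says _ φ => sdepth φ
  | .self _ φ => sdepth φ + 1

/-- Size of the formula structure (ignores terms). -/
def fsize : SFormula Ag Pr Vr Op → ℕ
  | .atom _ => 1
  | .neg φ => fsize φ + 1
  | .and φ ψ => fsize φ + fsize ψ + 1
  | .entails _ φ => fsize φ + 1
  | .signs _ _ => 1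
  | .says _ φ => fsize φ + 1
  | .self _ φ => fsize φ + 1

theorem sdepth_substF (x : Vr) (t : STerm Ag Pr Vr Op) :
    ∀ φ : SFormula Ag Pr Vr Op, sdepth (substF x t φ) = sdepth φ
  | .atom _ => rfl
  | .neg φ => by simp [substF, sdepth, sdepth_substF x t φ]
  | .and φ ψ => by simp [substF, sdepth, sdepth_substF x t φ, sdepth_substF x t ψ]
  | .entails u φ => by simp [substF, sdepth, sdepth_substF x t φ]
  | .signs _ _ => rfl
  | .says _ φ => by simp [substF, sdepth, sdepth_substF x t φ]
  | .self y φ => by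
      by_cases h : y = x <;> simp [substF, h, sdepth, sdepth_substF x t φ]

theorem fsize_pos : ∀ φ : SFormula Ag Pr Vr Op, 0 < fsize φ
  | .atom _ => Nat.zero_lt_one
  | .neg φ => Nat.succ_pos _
  | .and _ _ => Nat.succ_pos _
  | .entails _ _ => Nat.succ_pos _
  | .signs _ _ => Nat.zero_lt_one
  | .says _ _ => Nat.succ_pos _
  | .self _ _ => Nat.succ_pos _

theorem lex_nat_of {a b c d : ℕ} (h : a < c ∨ (a = c ∧ b < d)) :
    Prod.Lex (fun x y : ℕ => x < y) (fun x y : ℕ => x < y) (a, b) (c, d) := by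
  rcases h with h | ⟨rfl, h⟩
  · exact Prod.Lex.left _ _ h
  · exact Prod.Lex.right _ h

/-- Satisfaction for the self-referential signature logic. -/
def SatS (M : SModel Ag Pr Vr Op W) : W → SFormula Ag Pr Vr Op → Prop
  | w, .atom p => M.val w p
  | w, .neg φ => ¬ SatS M w φ
  | w, .and φ ψ => SatS M w φ ∧ SatS M w ψ
  | w, .entails t φ => ∀ w' : W, M.Rent t w' → SatS M w' φ
  | w, .signs A t => M.Rsig w A t
  | w, .says A φ => ∀ w' : W, M.Rsays w A w' → SatS M w' φ
  | w, .self x φ => SatS M w (substF x (.ofFormula (.self x φ)) φ)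
termination_by w φ => (sdepth φ, fsize φ)
decreasing_by
  all_goals simp only [sdepth, fsize, sdepth_substF]
  all_goals exact lex_nat_of (by omega)

def ValidS (M : SModel Ag Pr Vr Op W) (φ : SFormula Ag Pr Vr Op) : Prop :=
  ∀ w : W, SatS M w φ

/-- `φ` is a substitution instance of a propositional tautology. -/
def IsTautS (φ : SFormula Ag Pr Vr Op) : Prop :=
  ∀ v : SFormula Ag Pr Vr Op → Bool,
    (∀ ψ, v (.neg ψ) = !(v ψ)) →
    (∀ ψ χ, v (.and ψ χ) = (v ψ && v χ)) →
    v φ = true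

/-- Derivability in the self-referential signature logic (Ax1–Ax8, R1–R3). -/
inductive DerivS {Ag Pr Vr : Type} {Op : ℕ → Type} [DecidableEq Vr] :
    SFormula Ag Pr Vr Op → Prop where
  | ax1 {φ} : IsTautS φ → DerivS φ
  | ax2 (φ : SFormula Ag Pr Vr Op) : DerivS (.entails (.ofFormula φ) φ)
  | ax3 (t : STerm Ag Pr Vr Op) (φ ψ) :
      DerivS (((SFormula.entails t φ).and (.entails t (φ.imp ψ))).imp (.entails t ψ))
  | ax4 (A : Ag) (t : STerm Ag Pr Vr Op) (φ) :
      DerivS (((SFormula.signs A t).and (.entails t φ)).imp (.says A φ))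
  | ax5 (A : Ag) (φ ψ) :
      DerivS (((SFormula.says A φ).and (.says A (φ.imp ψ))).imp (.says A ψ))
  | ax6 (A B : Ag) (t : STerm Ag Pr Vr Op) :
      DerivS ((SFormula.signs B t).imp (.says A (.signs B t)))
  | ax7 (A : Ag) (t : STerm Ag Pr Vr Op) (φ) :
      DerivS ((SFormula.entails t φ).imp (.says A (.entails t φ)))
  | ax8 (x : Vr) (φ : SFormula Ag Pr Vr Op) :
      DerivS ((SFormula.self x φ).iff (substF x (.ofFormula (.self x φ)) φ))
  | r1 {φ ψ} : DerivS φ → DerivS (φ.imp ψ) → DerivS ψ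
  | r2 (t : STerm Ag Pr Vr Op) {φ} : DerivS φ → DerivS (.entails t φ)
  | r3 (A : Ag) {φ} : DerivS φ → DerivS (.says A φ)

/-- SC1 for the self-referential logic. -/
def SC1S (M : SModel Ag Pr Vr Op W) : Prop :=
  ∀ (φ : SFormula Ag Pr Vr Op) (w : W), M.Rent (.ofFormula φ) w → SatS M w φ

/-- SC2 for the self-referential logic. -/
def SC2S (M : SModel Ag Pr Vr Op W) : Prop :=
  ∀ (w : W) (A : Ag) (t : STerm Ag Pr Vr Op) (w' : W),
    M.Rsig w A t → M.Rsays w A w' → M.Rent t w'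

/-- SC3 for the self-referential logic. -/
def SC3S (M : SModel Ag Pr Vr Op W) : Prop :=
  ∀ (w : W) (A B : Ag) (t : STerm Ag Pr Vr Op) (w' : W),
    M.Rsig w B t → M.Rsays w A w' → M.Rsig w' B t

/-- The semantic operator `[G]` corresponding to `G says`, on sets of worlds. -/
def GStepS (M : SModel Ag Pr Vr Op W) (G : Finset Ag) (X : Set W) : Set W :=
  {w | ∀ A ∈ G, ∀ w' : W, M.Rsays w A w' → w' ∈ X}

/-- The set of worlds of `M` at which `G says^k φ` holds (`k ≥ 1`). -/
def GSaysKS (M : SModel Ag Pr Vr Op W) (G : Finset Ag) (φ : SFormula Ag Pr Vr Op)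
    (k : ℕ) : Set W :=
  (GStepS M G)^[k] {w | SatS M w φ}

/-- The set of worlds of `M` at which `G saysᵂ φ` holds. -/
def GSaysOmegaS (M : SModel Ag Pr Vr Op W) (G : Finset Ag) (φ : SFormula Ag Pr Vr Op) :
    Set W :=
  {w | ∀ k ≥ 1, w ∈ GSaysKS M G φ k}

/-- Child relation of the semantic tree: `Child M e' e` holds when the satisfaction
expression `e'` occurs on the right-hand side of the defining clause for `e`. -/
inductive Child (M : SModel Ag Pr Vr Op W) :
    W × SFormula Ag Pr Vr Op → W × SFormula Ag Pr Vr Op → Prop where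
  | neg {w φ} : Child M (w, φ) (w, .neg φ)
  | andL {w φ ψ} : Child M (w, φ) (w, .and φ ψ)
  | andR {w φ ψ} : Child M (w, ψ) (w, .and φ ψ)
  | entails {w w' t φ} : M.Rent t w' → Child M (w', φ) (w, .entails t φ)
  | says {w w' A φ} : M.Rsays w A w' → Child M (w', φ) (w, .says A φ)
  | self {w x φ} : Child M (w, substF x (.ofFormula (.self x φ)) φ) (w, .self x φ)

/-- The semantic tree rooted at `e` has height at most `n`. -/
def HtLE (M : SModel Ag Pr Vr Op W) : ℕ → W × SFormula Ag Pr Vr Op → Prop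
  | 0, e => ∀ e', ¬ Child M e' e
  | n + 1, e => ∀ e', Child M e' e → HtLE M n e'

/-- `F 0 ∧ (F 1 ∧ (⋯ ∧ F n))`: conjunction of a nonempty family of formulas. -/
def finConj : {n : ℕ} → (Fin (n + 1) → SFormula Ag Pr Vr Op) → SFormula Ag Pr Vr Op
  | 0, F => F 0
  | _ + 1, F => .and (F 0) (finConj (fun i => F i.succ))

mutual
theorem substT_notFree (x : Vr) (t : STerm Ag Pr Vr Op) :
    ∀ u : STerm Ag Pr Vr Op, ¬ FreeInT x u → substT x t u = u
  | .var y, h => by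
      simp only [substT]
      rw [if_neg]
      intro hy; exact h (by simpa [FreeInT] using hy)
  | .agent _, _ => rfl
  | .op n o f, h => by
      simp only [substT]
      congr 1
      funext i
      exact substT_notFree x t (f i) (fun hi => h ⟨i, hi⟩)
  | .ofFormula ψ, h => by
      simp only [substT, substF_notFree x t ψ h]

theorem substF_notFree (x : Vr) (t : STerm Ag Pr Vr Op) :
    ∀ ψ : SFormula Ag Pr Vr Op, ¬ FreeInF x ψ → substF x t ψ = ψ
  | .atom _, _ => rfl
  | .neg ψ, h => by simp only [substF, substF_notFree x t ψ h]
  | .and ψ χ, h => by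
      simp only [substF, substF_notFree x t ψ (fun hh => h (Or.inl hh)),
        substF_notFree x t χ (fun hh => h (Or.inr hh))]
  | .entails u ψ, h => by
      simp only [substF, substT_notFree x t u (fun hh => h (Or.inl hh)),
        substF_notFree x t ψ (fun hh => h (Or.inr hh))]
  | .signs _ u, h => by simp only [substF, substT_notFree x t u h]
  | .says _ ψ, h => by simp only [substF, substF_notFree x t ψ h]
  | .self y ψ, h => by
      by_cases hy : y = x
      · simp only [substF, if_pos hy]
      · simp only [substF, if_neg hy,
          substF_notFree x t ψ (fun hh => h ⟨hy, hh⟩)]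
end

namespace DerivS

variable {Ag Pr Vr : Type} {Op : ℕ → Type} [DecidableEq Vr]

lemma dand_intro {a b : SFormula Ag Pr Vr Op} (ha : DerivS a) (hb : DerivS b) :
    DerivS (a.and b) := by
  have t : DerivS (a.imp (b.imp (a.and b))) :=
    .ax1 (fun v hn hA => by
      simp only [SFormula.imp, hn, hA]; cases v a <;> cases v b <;> rfl)
  exact hb.r1 (ha.r1 t)

lemma dand_left {a b : SFormula Ag Pr Vr Op} (h : DerivS (a.and b)) : DerivS a := by
  have t : DerivS ((a.and b).imp a) :=
    .ax1 (fun v hn hA => by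
      simp only [SFormula.imp, hn, hA]; cases v a <;> cases v b <;> rfl)
  exact h.r1 t

lemma dimp_trans {a b c : SFormula Ag Pr Vr Op}
    (h1 : DerivS (a.imp b)) (h2 : DerivS (b.imp c)) : DerivS (a.imp c) := by
  have t : DerivS ((a.imp b).imp ((b.imp c).imp (a.imp c))) :=
    .ax1 (fun v hn hA => by
      simp only [SFormula.imp, hn, hA]
      cases v a <;> cases v b <;> cases v c <;> rfl)
  exact h2.r1 (h1.r1 t)

lemma dcurry' {a b c : SFormula Ag Pr Vr Op}
    (h : DerivS ((a.and b).imp c)) : DerivS (b.imp (a.imp c)) := by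
  have t : DerivS (((a.and b).imp c).imp (b.imp (a.imp c))) :=
    .ax1 (fun v hn hA => by
      simp only [SFormula.imp, hn, hA]
      cases v a <;> cases v b <;> cases v c <;> rfl)
  exact h.r1 t

lemma dmp_under {h a b : SFormula Ag Pr Vr Op}
    (h1 : DerivS (h.imp (a.imp b))) (h2 : DerivS (h.imp a)) : DerivS (h.imp b) := by
  have t : DerivS ((h.imp (a.imp b)).imp ((h.imp a).imp (h.imp b))) :=
    .ax1 (fun v hn hA => by
      simp only [SFormula.imp, hn, hA]
      cases v h <;> cases v a <;> cases v b <;> rfl)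
  exact h2.r1 (h1.r1 t)

/-- K-distribution for `says`. -/
lemma dsdist (A : Ag) (p q : SFormula Ag Pr Vr Op) :
    DerivS ((SFormula.says A (p.imp q)).imp ((SFormula.says A p).imp (.says A q))) :=
  dcurry' (DerivS.ax5 A p q)

end DerivS

namespace DerivS
variable {Ag Pr Vr : Type} {Op : ℕ → Type} [DecidableEq Vr]

lemma dimp_and_left {a b : SFormula Ag Pr Vr Op} : DerivS ((a.and b).imp a) :=
  .ax1 (fun v hn hA => by
    simp only [SFormula.imp, hn, hA]; cases v a <;> cases v b <;> rfl)

lemma dimp_and_right {a b : SFormula Ag Pr Vr Op} : DerivS ((a.and b).imp b) :=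
  .ax1 (fun v hn hA => by
    simp only [SFormula.imp, hn, hA]; cases v a <;> cases v b <;> rfl)

lemma dpair {a b : SFormula Ag Pr Vr Op} : DerivS (a.imp (b.imp (a.and b))) :=
  .ax1 (fun v hn hA => by
    simp only [SFormula.imp, hn, hA]; cases v a <;> cases v b <;> rfl)

lemma dand_intro_under {h a b : SFormula Ag Pr Vr Op}
    (h1 : DerivS (h.imp a)) (h2 : DerivS (h.imp b)) : DerivS (h.imp (a.and b)) :=
  (h1.dimp_trans dpair).dmp_under h2

end DerivS

/-- for `c = this x. (((A signs x) ∧ (B signs x)) → φ)` with `φ` closed, the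
formula `((A signs c) ∧ (B signs c)) → ((A says φ) ∧ (B says φ))` is derivable
(correctness of signature in counterparts). -/
theorem counterparts_correct (A B : Ag) (x : Vr) (φ : SFormula Ag Pr Vr Op)
    (hφ : Sentence φ) (c : SFormula Ag Pr Vr Op)
    (hc : c = .self x (((SFormula.signs A (.var x)).and (.signs B (.var x))).imp φ)) :
    DerivS (((SFormula.signs A (.ofFormula c)).and (.signs B (.ofFormula c))).imp
      ((SFormula.says A φ).and (.says B φ))) := by
  classical
  set c' : STerm Ag Pr Vr Op := .ofFormula c with hc'
  set sA : SFormula Ag Pr Vr Op := .signs A c' with hsA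
  set sB : SFormula Ag Pr Vr Op := .signs B c' with hsB
  set H : SFormula Ag Pr Vr Op := sA.and sB with hH
  set χ : SFormula Ag Pr Vr Op := H.imp φ with hχ
  -- Step 1: c' ⊳ c
  have S1 : DerivS (SFormula.entails c' c) := DerivS.ax2 c
  -- Step 2: ⊢ c → χ, via ax8 and the substitution computation
  have hsub : substF x (.ofFormula c)
      ((((SFormula.signs A (.var x)).and (.signs B (.var x))).imp φ)) = χ := by
    simp [SFormula.imp, substF, substT, substF_notFree x _ φ (hφ x), hχ, hH, hsA, hsB, hc']
  have S2 : DerivS (c.imp χ) := by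
    have h8 := DerivS.ax8 (Op := Op) x
      (((SFormula.signs A (.var x)).and (.signs B (.var x))).imp φ)
    rw [← hc] at h8
    rw [hsub] at h8
    exact h8.dand_left
  -- Step 3: ⊢ c' ⊳ χ
  have S3 : DerivS (SFormula.entails c' χ) := by
    have h2 := DerivS.r2 c' S2
    exact (S1.dand_intro h2).r1 (DerivS.ax3 c' c χ)
  -- `sG → G says χ` from ax4 and S3
  have sigSays : ∀ G : Ag,
      DerivS ((SFormula.signs G c').imp (.says G χ)) := fun G =>
    S3.r1 (DerivS.dcurry' (DerivS.ax4 G c' χ))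
  have hHA : DerivS (H.imp sA) := DerivS.dimp_and_left
  have hHB : DerivS (H.imp sB) := DerivS.dimp_and_right
  -- per-agent derivation of H → (G says φ), given H → (G signs c')
  have main : ∀ G : Ag, DerivS (H.imp (.signs G c')) → DerivS (H.imp (.says G φ)) := by
    intro G hHsG
    have hHχ : DerivS (H.imp (.says G χ)) := hHsG.dimp_trans (sigSays G)
    -- H → G says sA, H → G says sB  (via ax6)
    have h6A : DerivS (H.imp (.says G sA)) :=
      hHA.dimp_trans (by simpa [hsA] using DerivS.ax6 G A c')
    have h6B : DerivS (H.imp (.says G sB)) :=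
      hHB.dimp_trans (by simpa [hsB] using DerivS.ax6 G B c')
    -- H → G says H
    have htH : DerivS (sA.imp (sB.imp H)) := DerivS.dpair
    have hsaysH : DerivS (H.imp (.says G H)) := by
      have k1 : DerivS ((SFormula.says G sA).imp (.says G (sB.imp H))) :=
        (DerivS.r3 G htH).r1 (DerivS.dsdist G sA (sB.imp H))
      have k2 : DerivS (H.imp (.says G (sB.imp H))) := h6A.dimp_trans k1
      have k3 : DerivS (H.imp ((SFormula.says G sB).imp (.says G H))) :=
        k2.dimp_trans (DerivS.dsdist G sB H)
      exact k3.dmp_under h6B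
    have k4 : DerivS (H.imp ((SFormula.says G H).imp (.says G φ))) :=
      hHχ.dimp_trans (by simpa [hχ] using DerivS.dsdist G H φ)
    exact k4.dmp_under hsaysH
  have mA : DerivS (H.imp (.says A φ)) := main A (by simpa [hsA] using hHA)
  have mB : DerivS (H.imp (.says B φ)) := main B (by simpa [hsB] using hHB)
  exact mA.dand_intro_under mB
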